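/- For every τ ∈ {0,1}^ℕ, every y ∈ Y_τ and every L ≥ 1, there exists i ∈ {0, 1, ..., 3^L − 1} such that y = S^i (φ_{τ_0} ∘ φ_{τ_1} ∘ ⋯ ∘ φ_{τ_{L−1}})(Δ^L y). -/

import Mathlib

open MeasureTheory Filter Topology
open scoped ENNReal

attribute [local instance] Classical.propDecidable

noncomputable section

/-- The shift map on bi-infinite sequences: `(S x) n = x (n+1)`. -/
def shift {α : Type*} (x : ℤ → α) : ℤ → α := fun n => x (n + 1)

/-- Shift by an arbitrary integer amount `m`. -/
def shiftZ {α : Type*} (m : ℤ) (x : ℤ → α) : ℤ → α := fun n => x (n + m)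

/-- A run structure on a bi-infinite sequence `x`: `t k` is the starting index of the
`k`-th maximal mono-symbol block of `x`, indexed so that block `0` contains position `0`. -/
structure RunStructure (x : ℤ → ℕ) where
  t : ℤ → ℤ
  mono : StrictMono t
  start_nonpos : t 0 ≤ 0
  start_pos : 0 < t 1
  const : ∀ k i : ℤ, t k ≤ i → i < t (k + 1) → x i = x (t k)
  alt : ∀ k : ℤ, x (t (k + 1)) ≠ x (t k)

/-- `d` is the run-length derivative of `x`: `d k` is the length of the `k`-th run. -/
def IsDelta (x d : ℤ → ℕ) : Prop :=
  ∃ r : RunStructure x, ∀ k : ℤ, (d k : ℤ) = r.t (k + 1) - r.t k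

/-- The run-length derivative operator `Δ` (junk value when no derivative exists). -/
def delta (x : ℤ → ℕ) : ℤ → ℕ :=
  if h : ∃ d, IsDelta x d then h.choose else fun _ => 0

/-- A bi-infinite sequence is smooth over `{1,3}` if all its iterated derivatives exist
and take values in `{1,3}`. -/
def SmoothSeq (x : ℤ → ℕ) : Prop :=
  ∀ k : ℕ, ∀ n : ℤ, delta^[k] x n = 1 ∨ delta^[k] x n = 3

/-- The set `X` of bi-infinite smooth sequences over `{1,3}`. -/
def SmoothX : Set (ℤ → ℕ) := {x | SmoothSeq x}

/-- The recoding alphabet: `A = 1`, `B = 3`, `C = 111`, `D = 333`. -/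
inductive ABCD : Type
  | A | B | C | D
deriving DecidableEq

instance : TopologicalSpace ABCD := ⊥
instance : DiscreteTopology ABCD := ⟨rfl⟩
instance : MeasurableSpace ABCD := ⊤

open ABCD

/-- The symbol (1 or 3) of the run encoded by a letter. -/
def sval : ABCD → ℕ
  | A => 1
  | B => 3
  | C => 1
  | D => 3

/-- The length (1 or 3) of the run encoded by a letter; this is also the value of `Δx`
at the corresponding position. -/
def lval : ABCD → ℕ
  | A => 1
  | B => 1
  | C => 3
  | D => 3

/-- `y` is the recoding of `x`: the letter `y k` encodes the `k`-th run of `x`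
(its symbol and its length). -/
def IsRecoding (x : ℤ → ℕ) (y : ℤ → ABCD) : Prop :=
  ∃ r : RunStructure x, ∀ k : ℤ,
    x (r.t k) = sval (y k) ∧ r.t (k + 1) - r.t k = (lval (y k) : ℤ)

/-- The recoding map `rec` (junk value when no recoding exists). -/
def recode (x : ℤ → ℕ) : ℤ → ABCD :=
  if h : ∃ y, IsRecoding x y then h.choose else fun _ => A

/-- The set `Y = rec(X)` of recodings of smooth sequences. -/
def SmoothY : Set (ℤ → ABCD) := recode '' SmoothX

/-- The derivative operator induced on recodings: since `(Δx) i = lval (rec x i)`,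
we have `Δ(rec x) = rec (Δ x) = recode (lval ∘ rec x)`. -/
def deltaY (y : ℤ → ABCD) : ℤ → ABCD := recode fun i => (lval (y i) : ℕ)

/-- `y` is well-aligned: the elementary block of `y` containing coordinate `0` starts
at position `0` (elementary blocks of `y` are exactly the runs of `Δx`, and
`(Δx) i = lval (y i)`). -/
def WellAligned (y : ℤ → ABCD) : Prop := lval (y (-1)) ≠ lval (y 0)

/-- `B_Y^L`: the set of `y ∈ Y` such that `y, Δy, ..., Δ^{L-1} y` are all well-aligned. -/
def BY (L : ℕ) : Set (ℤ → ABCD) :=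
  {y | y ∈ SmoothY ∧ ∀ l < L, WellAligned (deltaY^[l] y)}

/-- `Σ_y^L(n) = #{k ∈ [1,n] : S^k y ∈ B_Y^L}`. -/
def SigY (L : ℕ) (y : ℤ → ABCD) (n : ℕ) : ℕ :=
  ((Finset.Icc 1 n).filter fun k => shift^[k] y ∈ BY L).card

/-- `y` contains an elementary block in `{ABA, DCD}` (for `y ∈ Y`, any such factor is
automatically an elementary block). -/
def HasType0 (y : ℤ → ABCD) : Prop :=
  ∃ i : ℤ, (y i = A ∧ y (i + 1) = B ∧ y (i + 2) = A) ∨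
           (y i = D ∧ y (i + 1) = C ∧ y (i + 2) = D)

/-- `y` contains an elementary block in `{BAB, CDC}`. -/
def HasType1 (y : ℤ → ABCD) : Prop :=
  ∃ i : ℤ, (y i = B ∧ y (i + 1) = A ∧ y (i + 2) = B) ∨
           (y i = C ∧ y (i + 1) = D ∧ y (i + 2) = C)

/-- The type of a recoded sequence: `false` = type 0, `true` = type 1. -/
def typeOf (y : ℤ → ABCD) : Bool := decide (HasType1 y)

/-- The sequence of types of the successive derivatives of a smooth sequence `x`. -/
def TypesX (x : ℤ → ℕ) : ℕ → Bool := fun n => typeOf (recode (delta^[n] x))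

/-- The sequence of types of the successive derivatives of a recoded sequence `y`. -/
def TypesY (y : ℤ → ABCD) : ℕ → Bool := fun n => typeOf (deltaY^[n] y)

/-- `X_τ`: smooth bi-infinite sequences whose type sequence is exactly `τ`. -/
def Xset (τ : ℕ → Bool) : Set (ℤ → ℕ) := {x ∈ SmoothX | TypesX x = τ}

/-- `Y_τ = rec(X_τ)`. -/
def Yset (τ : ℕ → Bool) : Set (ℤ → ABCD) := recode '' Xset τ

/-- A sequence over `{A,B,C,D}` is alternating: no two consecutive symbols in `{A,C}`
and no two consecutive symbols in `{B,D}`. -/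
def Alternating (y : ℤ → ABCD) : Prop := ∀ n : ℤ, sval (y n) ≠ sval (y (n + 1))

/-- The substitutions `φ₀` and `φ₁` on letters. -/
def phiW : Bool → ABCD → List ABCD
  | false, A => [A]
  | false, B => [D]
  | false, C => [A, B, A]
  | false, D => [D, C, D]
  | true, A => [B]
  | true, B => [C]
  | true, C => [B, A, B]
  | true, D => [C, D, C]

/-- `z` is the image of the bi-infinite sequence `y` under the substitution `φ_t`, with
the convention that the image of the letter at position `0` starts at position `0`. -/
def IsSubst (t : Bool) (y z : ℤ → ABCD) : Prop :=
  ∃ u : ℤ → ℤ, u 0 = 0 ∧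
    (∀ k : ℤ, u (k + 1) = u k + (phiW t (y k)).length) ∧
    (∀ k : ℤ, ∀ j : Fin (phiW t (y k)).length, z (u k + (j : ℕ)) = (phiW t (y k)).get j)

/-- The substitution `φ_t` on bi-infinite sequences. -/
def substF (t : Bool) (y : ℤ → ABCD) : ℤ → ABCD :=
  if h : ∃ z, IsSubst t y z then h.choose else y

/-- The composition `φ_{τ₀} ∘ φ_{τ₁} ∘ ⋯ ∘ φ_{τ_{L-1}}`. -/
def substComp (τ : ℕ → Bool) : ℕ → (ℤ → ABCD) → (ℤ → ABCD)
  | 0 => id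
  | L + 1 => substF (τ 0) ∘ substComp (fun n => τ (n + 1)) L

/-- The homographies `h₀` and `h₁`. -/
def hmap : Bool → ℝ × ℝ → ℝ × ℝ
  | false, p => ((1 - p.1) / (3 - 2 * (p.1 + p.2)), (1 / 2 - p.1) / (3 - 2 * (p.1 + p.2)))
  | true, p => ((1 / 2 - p.1) / (3 - 2 * (p.1 + p.2)), (1 - p.1) / (3 - 2 * (p.1 + p.2)))

/-- The square `K = [0,1/2] × [0,1/2]`. -/
def Ksq : Set (ℝ × ℝ) := Set.Icc (0 : ℝ) (1 / 2) ×ˢ Set.Icc (0 : ℝ) (1 / 2)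

/-- The domain `E = {(a,b) ∈ K : a + b ≤ 3/4}`. -/
def Eset : Set (ℝ × ℝ) := {p ∈ Ksq | p.1 + p.2 ≤ 3 / 4}

/-- The composition `h_{t₀} ∘ h_{t₁} ∘ ⋯ ∘ h_{t_L}`. -/
def hComp (t : ℕ → Bool) : ℕ → (ℝ × ℝ → ℝ × ℝ)
  | 0 => hmap (t 0)
  | L + 1 => hComp t L ∘ hmap (t (L + 1))

/-- The point `(a(t), b(t))`, unique point of `⋂_L (h_{t₀} ∘ ⋯ ∘ h_{t_L})(E)`. -/
def abPoint (t : ℕ → Bool) : ℝ × ℝ :=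
  if h : ∃ p : ℝ × ℝ, (⋂ L : ℕ, hComp t L '' Eset) = {p} then h.choose else 0

/-- The number of occurrences of the letter `s` among positions `1, ..., m` of `z`. -/
def letterCount (s : ABCD) (z : ℤ → ABCD) (m : ℕ) : ℕ :=
  ((Finset.Icc 1 m).filter fun k => z (k : ℤ) = s).card

/-- `w` occurs as a factor of `y` at position `i`. -/
def IsFactorAt (w : List ABCD) (y : ℤ → ABCD) (i : ℤ) : Prop :=
  ∀ j : Fin w.length, y (i + (j : ℕ)) = w.get j

/-- The cylinder set `[w]` in `{1,3}^ℤ`. -/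
def cylX (w : List ℕ) : Set (ℤ → ℕ) :=
  {x | ∀ j : Fin w.length, x ((j : ℕ) : ℤ) = w.get j}

/-- The cylinder set `[w]` in `{A,B,C,D}^ℤ`. -/
def cylY (w : List ABCD) : Set (ℤ → ABCD) :=
  {y | ∀ j : Fin w.length, y ((j : ℕ) : ℤ) = w.get j}

/-- The number of occurrences of the finite word `w` in the prefix `x₀ ⋯ x_{n-1}`. -/
def occCount (x : ℤ → ℕ) (w : List ℕ) (n : ℕ) : ℕ :=
  ((Finset.range n).filter fun i =>
    i + w.length ≤ n ∧ ∀ j : Fin w.length, x (((i + (j : ℕ) : ℕ)) : ℤ) = w.get j).card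

/-- A subshift `Z` is minimal if it contains no nonempty proper closed shift-invariant
subset. -/
def ShiftMinimal {α : Type*} [TopologicalSpace α] (Z : Set (ℤ → α)) : Prop :=
  ∀ W : Set (ℤ → α), W ⊆ Z → W.Nonempty → IsClosed W → shift '' W = W → W = Z

/-!
Write `y = rec x`. The elementary blocks of `y` are the runs of `lval ∘ y = Δx`, and `Δy`
records each block by one letter: its `sval` is the common `lval` of the block, its `lval` the
block's length. Since `y` alternates in `sval`, the phase (`A, D ↦ 0`, `B, C ↦ 1`) flips inside
a block and is kept across a block boundary. Blocks have odd length, so all of them start in the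
same phase, which is the type of `y`, and each block is then the `φ_type`-image of its letter
of `Δy`. Hence `y` is `φ_{type y}(Δy)` shifted by fewer than `3` places, back to the start of
the block containing position `0`. Iterating, a shift of `Δy` by `j` places becomes a shift by
at most `3j` places after substitution, which gives the bound `3^L`.
-/

lemma shift_iterate_apply {α : Type*} (x : ℤ → α) (m : ℕ) (n : ℤ) :
    shift^[m] x n = x (n + m) := by
  induction m generalizing n with
  | zero => simp
  | succ m ih =>
    rw [Function.iterate_succ_apply', shift, ih]
    congr 1
    push_cast
    ring

namespace StrictMono

variable {t t' : ℤ → ℤ}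

lemma add_sub_le (ht : StrictMono t) {a b : ℤ} (hab : a ≤ b) : t a + (b - a) ≤ t b := by
  induction b, hab using Int.leInduction with
  | base => simp
  | succ b _ ih =>
    have := ht (lt_add_one b)
    omega

lemma exists_apply_le_lt_apply_add_one (ht : StrictMono t) (n : ℤ) :
    ∃ k, t k ≤ n ∧ n < t (k + 1) := by
  have hbdd : ∃ b, ∀ m, t m ≤ n → m ≤ b := by
    refine ⟨max 0 (n - t 0), fun m hm => ?_⟩
    rcases le_total m 0 with h | h
    · omega
    · have := ht.add_sub_le h
      omega
  have hne : ∃ m, t m ≤ n := by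
    refine ⟨min 0 (n - t 0), ?_⟩
    have := ht.add_sub_le (min_le_left 0 (n - t 0))
    omega
  obtain ⟨k, hk, hmax⟩ := Int.exists_greatest_of_bdd hbdd hne
  exact ⟨k, hk, not_le.1 fun h => by have := hmax _ h; omega⟩

lemma eq_of_range_eq (ht : StrictMono t) (ht' : StrictMono t') (hr : Set.range t = Set.range t')
    (h0 : t 0 ≤ 0) (h1 : 0 < t 1) (h0' : t' 0 ≤ 0) (h1' : 0 < t' 1) : t = t' := by
  have gap {s s' : ℤ → ℤ} (hs : StrictMono s) (hr : Set.range s' ⊆ Set.range s) (k m : ℤ)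
      (hlo : s k < s' m) (hhi : s' m < s (k + 1)) : False := by
    obtain ⟨l, hl⟩ := hr ⟨m, rfl⟩
    exact hs.monotone.ne_of_lt_of_lt_int k hlo hhi l hl
  have base {s s' : ℤ → ℤ} (hs : StrictMono s) (hr : Set.range s' ⊆ Set.range s)
      (h1 : 0 < s 1) (h0' : s' 0 ≤ 0) : s' 0 ≤ s 0 :=
    not_lt.1 fun h => gap hs hr 0 0 h (by simpa using h0'.trans_lt h1)
  have succ {s s' : ℤ → ℤ} (hs : StrictMono s) (hs' : StrictMono s')
      (hr : Set.range s' ⊆ Set.range s) (k : ℤ) (hk : s k = s' k) : s (k + 1) ≤ s' (k + 1) :=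
    not_lt.1 fun h => gap hs hr k (k + 1) (hk ▸ hs' (lt_add_one k)) h
  have pred {s s' : ℤ → ℤ} (hs : StrictMono s) (hs' : StrictMono s')
      (hr : Set.range s' ⊆ Set.range s) (k : ℤ) (hk : s k = s' k) : s' (k - 1) ≤ s (k - 1) :=
    not_lt.1 fun h => gap hs hr (k - 1) (k - 1) h
      (by rw [sub_add_cancel, hk]; exact hs' (sub_one_lt k))
  funext k
  induction k using Int.induction_on with
  | zero => exact le_antisymm (base ht' hr.le h1' h0) (base ht hr.symm.le h1 h0')
  | succ k ih =>
    exact le_antisymm (succ ht ht' hr.symm.le k ih) (succ ht' ht hr.le k ih.symm)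
  | pred k ih =>
    exact le_antisymm (pred ht' ht hr.le _ ih.symm) (pred ht ht' hr.symm.le _ ih)

end StrictMono

namespace RunStructure

variable {x : ℤ → ℕ} (r : RunStructure x)

lemma exists_t_le_lt (n : ℤ) : ∃ k, r.t k ≤ n ∧ n < r.t (k + 1) :=
  r.mono.exists_apply_le_lt_apply_add_one n

lemma range_t : Set.range r.t = {i | x i ≠ x (i - 1)} := by
  ext i
  constructor
  · rintro ⟨k, rfl⟩
    have hlt := r.mono (sub_one_lt k)
    have hprev := r.const (k - 1) (r.t k - 1) (by omega) (by rw [sub_add_cancel]; omega)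
    have halt := r.alt (k - 1)
    rw [sub_add_cancel] at halt
    show x (r.t k) ≠ x (r.t k - 1)
    rwa [hprev]
  · intro hi
    obtain ⟨k, hk, hk'⟩ := r.exists_t_le_lt i
    refine ⟨k, by_contra fun hne => hi ?_⟩
    have hlt := lt_of_le_of_ne hk hne
    rw [r.const k i hk hk', r.const k (i - 1) (by omega) (by omega)]

lemma t_eq (r' : RunStructure x) : r.t = r'.t :=
  r.mono.eq_of_range_eq r'.mono (by rw [r.range_t, r'.range_t])
    r.start_nonpos r.start_pos r'.start_nonpos r'.start_pos

end RunStructure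

lemma ABCD.exists_sval_lval {s l : ℕ} (hs : s = 1 ∨ s = 3) (hl : l = 1 ∨ l = 3) :
    ∃ a, sval a = s ∧ lval a = l := by
  rcases hs with rfl | rfl <;> rcases hl with rfl | rfl
  exacts [⟨A, rfl, rfl⟩, ⟨C, rfl, rfl⟩, ⟨B, rfl, rfl⟩, ⟨D, rfl, rfl⟩]

section Smooth

variable {x : ℤ → ℕ}

lemma SmoothSeq.apply_eq_one_or_three (hx : SmoothSeq x) (n : ℤ) : x n = 1 ∨ x n = 3 :=
  hx 0 n

lemma smoothSeq_delta (hx : SmoothSeq x) : SmoothSeq (delta x) := fun k n => by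
  simpa only [Function.iterate_succ_apply] using hx (k + 1) n

lemma SmoothSeq.isDelta_delta (hx : SmoothSeq x) : IsDelta x (delta x) := by
  by_cases h : ∃ d, IsDelta x d
  · rw [delta, dif_pos h]
    exact h.choose_spec
  · have h1 := hx 1 0
    simp [delta, dif_neg h] at h1

lemma SmoothSeq.isRecoding_recode (hx : SmoothSeq x) : IsRecoding x (recode x) := by
  obtain ⟨r, hr⟩ := hx.isDelta_delta
  have hletter k : ∃ a, sval a = x (r.t k) ∧ lval a = delta x k :=
    ABCD.exists_sval_lval (hx.apply_eq_one_or_three _)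
      ((smoothSeq_delta hx).apply_eq_one_or_three k)
  choose y hy using hletter
  have hex : ∃ y, IsRecoding x y := ⟨y, r, fun k => ⟨(hy k).1.symm, by rw [(hy k).2, hr]⟩⟩
  rw [recode, dif_pos hex]
  exact hex.choose_spec

lemma SmoothSeq.lval_recode (hx : SmoothSeq x) (k : ℤ) : lval (recode x k) = delta x k := by
  obtain ⟨r, hr⟩ := hx.isRecoding_recode
  obtain ⟨r', hr'⟩ := hx.isDelta_delta
  have hlen := (hr k).2
  rw [r.t_eq r', ← hr' k] at hlen
  omega

lemma SmoothSeq.deltaY_recode (hx : SmoothSeq x) : deltaY (recode x) = recode (delta x) :=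
  congrArg recode (funext hx.lval_recode)

lemma SmoothSeq.alternating_recode (hx : SmoothSeq x) : Alternating (recode x) := by
  obtain ⟨r, hr⟩ := hx.isRecoding_recode
  intro n
  rw [← (hr n).1, ← (hr (n + 1)).1]
  exact (r.alt n).symm

/-- If `Δy` only had letters `A`, `B`, then `Δ²x ≡ 1` would have no derivative. -/
lemma SmoothSeq.exists_lval_deltaY_recode_eq_three (hx : SmoothSeq x) :
    ∃ k, lval (deltaY (recode x) k) = 3 := by
  have hx' := smoothSeq_delta hx
  by_contra! h
  have hone k : delta (delta x) k = 1 := by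
    have hk := h k
    rw [hx.deltaY_recode, hx'.lval_recode] at hk
    have := (smoothSeq_delta hx').apply_eq_one_or_three k
    omega
  have hnone : ¬ ∃ d, IsDelta (delta (delta x)) d := by
    rintro ⟨d, r, -⟩
    exact r.alt 0 (by rw [hone, hone])
  have hjunk : delta (delta (delta x)) = fun _ => 0 := dif_neg hnone
  have h3 : delta (delta (delta x)) 0 = 1 ∨ delta (delta (delta x)) 0 = 3 := hx 3 0
  simp [hjunk] at h3

end Smooth

/-- `A` and `D` begin the images under `φ₀`, `B` and `C` those under `φ₁`. -/
def ABCD.phase : ABCD → Bool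
  | A => false
  | B => true
  | C => true
  | D => false

namespace ABCD

lemma eq_of_lval_eq_of_phase_eq {a b : ABCD} (hl : lval a = lval b) (hp : phase a = phase b) :
    a = b := by
  cases a <;> cases b <;> simp_all [lval, phase]

lemma phase_eq_not_of_lval_eq {a b : ABCD} (hs : sval a ≠ sval b) (hl : lval b = lval a) :
    phase b = !phase a := by
  cases a <;> cases b <;> simp_all [sval, lval, phase]

lemma phase_eq_of_lval_ne {a b : ABCD} (hs : sval a ≠ sval b) (hl : lval b ≠ lval a) :
    phase b = phase a := by
  cases a <;> cases b <;> simp_all [sval, lval, phase]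

lemma lval_eq_one_or_three (a : ABCD) : lval a = 1 ∨ lval a = 3 := by
  cases a <;> simp [lval]

end ABCD

lemma length_phiW (t : Bool) (a : ABCD) : (phiW t a).length = lval a := by
  cases t <;> cases a <;> rfl

lemma lval_phiW_get (t : Bool) (a : ABCD) (j : Fin (phiW t a).length) :
    lval ((phiW t a).get j) = sval a := by
  cases t <;> cases a <;> revert j <;> decide

lemma phase_phiW_get (t : Bool) (a : ABCD) (j : Fin (phiW t a).length) :
    phase ((phiW t a).get j) = (t ^^ (j : ℕ).bodd) := by
  cases t <;> cases a <;> revert j <;> decide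

lemma Alternating.phase_add {y : ℤ → ABCD} (hy : Alternating y) {p : ℤ} {n : ℕ}
    (hl : ∀ i ≤ n, lval (y (p + i)) = lval (y p)) :
    phase (y (p + n)) = (phase (y p) ^^ n.bodd) := by
  induction n with
  | zero => simp
  | succ n ih =>
    have hnext := phase_eq_not_of_lval_eq (hy (p + n))
      (by rw [add_assoc, ← Nat.cast_one, ← Nat.cast_add, hl (n + 1) le_rfl, hl n n.le_succ])
    push_cast at hnext ⊢
    rw [← add_assoc, hnext, ih fun i hi => hl i (hi.trans n.le_succ), Nat.bodd_succ]
    cases phase (y p) <;> cases n.bodd <;> rfl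

section Blocks

variable {y w : ℤ → ABCD} {r : RunStructure fun i => lval (y i)}

lemma lval_eq_sval_of_mem_block
    (hr : ∀ k, lval (y (r.t k)) = sval (w k) ∧ r.t (k + 1) - r.t k = lval (w k))
    {k i : ℤ} (h1 : r.t k ≤ i) (h2 : i < r.t (k + 1)) : lval (y i) = sval (w k) :=
  (r.const k i h1 h2).trans (hr k).1

lemma phase_add_of_mem_block (hy : Alternating y) {k : ℤ} {j : ℕ}
    (hj : r.t k + j < r.t (k + 1)) :
    phase (y (r.t k + j)) = (phase (y (r.t k)) ^^ j.bodd) :=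
  hy.phase_add fun i hi => r.const k _ (by omega) (by omega)

lemma phase_t_add_one (hy : Alternating y)
    (hr : ∀ k, lval (y (r.t k)) = sval (w k) ∧ r.t (k + 1) - r.t k = lval (w k)) (k : ℤ) :
    phase (y (r.t (k + 1))) = phase (y (r.t k)) := by
  obtain ⟨n, hn, hlen⟩ : ∃ n : ℕ, n.bodd = false ∧ r.t (k + 1) = r.t k + n + 1 := by
    rcases lval_eq_one_or_three (w k) with h | h
    · exact ⟨0, rfl, by have := (hr k).2; omega⟩
    · exact ⟨2, rfl, by have := (hr k).2; omega⟩
  have hlast := phase_add_of_mem_block hy (show r.t k + n < r.t (k + 1) by omega)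
  rw [hn, Bool.xor_false] at hlast
  rw [← hlast, hlen]
  refine phase_eq_of_lval_ne (hy _) fun heq => r.alt k ?_
  simp only [hlen]
  rw [heq, r.const k _ (by omega) (by omega)]

lemma phase_t (hy : Alternating y)
    (hr : ∀ k, lval (y (r.t k)) = sval (w k) ∧ r.t (k + 1) - r.t k = lval (w k)) (k : ℤ) :
    phase (y (r.t k)) = phase (y (r.t 0)) := by
  induction k using Int.induction_on with
  | zero => rfl
  | succ k ih => rw [phase_t_add_one hy hr, ih]
  | pred k ih => rw [← ih, ← phase_t_add_one hy hr, sub_add_cancel]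

lemma block_eq_phiW (hy : Alternating y)
    (hr : ∀ k, lval (y (r.t k)) = sval (w k) ∧ r.t (k + 1) - r.t k = lval (w k)) (k : ℤ)
    (j : Fin (phiW (phase (y (r.t 0))) (w k)).length) :
    y (r.t k + (j : ℕ)) = (phiW (phase (y (r.t 0))) (w k)).get j := by
  have hj : r.t k + (j : ℕ) < r.t (k + 1) := by
    have := j.isLt.trans_eq (length_phiW _ _)
    have := (hr k).2
    omega
  refine eq_of_lval_eq_of_phase_eq ?_ ?_
  · rw [lval_phiW_get, lval_eq_sval_of_mem_block hr (by omega) hj]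
  · rw [phase_phiW_get, phase_add_of_mem_block hy hj, phase_t hy hr]

lemma isSubst_shiftZ (hy : Alternating y)
    (hr : ∀ k, lval (y (r.t k)) = sval (w k) ∧ r.t (k + 1) - r.t k = lval (w k)) :
    IsSubst (phase (y (r.t 0))) w (shiftZ (r.t 0) y) := by
  refine ⟨fun k => r.t k - r.t 0, sub_self _, fun k => ?_, fun k j => ?_⟩
  · have := (hr k).2
    rw [length_phiW]
    dsimp only
    omega
  · convert block_eq_phiW hy hr k j using 2
    dsimp only [shiftZ]
    congr 1
    ring

lemma exists_t_eq_of_lval_eq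
    (hr : ∀ k, lval (y (r.t k)) = sval (w k) ∧ r.t (k + 1) - r.t k = lval (w k)) {i : ℤ}
    (h1 : lval (y (i + 1)) = lval (y i)) (h2 : lval (y (i + 2)) = lval (y i)) :
    ∃ k, r.t k = i := by
  obtain ⟨k, hk, hk'⟩ := r.exists_t_le_lt i
  have hin : i + 2 < r.t (k + 1) := by
    by_contra! hout
    refine r.alt k ?_
    have hend : r.t (k + 1) = i + 1 ∨ r.t (k + 1) = i + 2 := by omega
    show lval (y (r.t (k + 1))) = lval (y (r.t k))
    rcases hend with h | h <;> rw [h, ← (r.const k i hk hk' : lval (y i) = _)] <;> assumption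
  have := (hr k).2
  have := lval_eq_one_or_three (w k)
  exact ⟨k, by omega⟩

lemma typeOf_eq_phase (hy : Alternating y)
    (hr : ∀ k, lval (y (r.t k)) = sval (w k) ∧ r.t (k + 1) - r.t k = lval (w k))
    (hw : ∃ k, lval (w k) = 3) : typeOf y = phase (y (r.t 0)) := by
  rw [typeOf]
  cases hp : phase (y (r.t 0))
  · refine decide_eq_false ?_
    rintro ⟨i, ⟨h0, h1, h2⟩ | ⟨h0, h1, h2⟩⟩ <;>
    · obtain ⟨k, hk⟩ := exists_t_eq_of_lval_eq (i := i) hr (by simp [h0, h1, lval])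
        (by simp [h0, h2, lval])
      have := phase_t hy hr k
      rw [hk, h0, hp] at this
      contradiction
  · refine decide_eq_true ?_
    obtain ⟨k, hk⟩ := hw
    have hblock := block_eq_phiW hy hr k
    rw [hp] at hblock
    refine ⟨r.t k, ?_⟩
    revert hk hblock
    cases w k <;> intro hk hblock <;> simp only [lval] at hk <;> (try omega)
    · exact Or.inl ⟨by simpa [phiW] using hblock ⟨0, by simp [phiW]⟩,
        by simpa [phiW] using hblock ⟨1, by simp [phiW]⟩,
        by simpa [phiW] using hblock ⟨2, by simp [phiW]⟩⟩
    · exact Or.inr ⟨by simpa [phiW] using hblock ⟨0, by simp [phiW]⟩,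
        by simpa [phiW] using hblock ⟨1, by simp [phiW]⟩,
        by simpa [phiW] using hblock ⟨2, by simp [phiW]⟩⟩

end Blocks

section Substitution

variable {t : Bool} {w z : ℤ → ABCD}

lemma IsSubst.unique {z' : ℤ → ABCD} (h : IsSubst t w z) (h' : IsSubst t w z') : z = z' := by
  obtain ⟨u, hu0, hus, hz⟩ := h
  obtain ⟨u', hu0', hus', hz'⟩ := h'
  have huu : u = u' := by
    funext k
    induction k using Int.induction_on with
    | zero => rw [hu0, hu0']
    | succ k ih => rw [hus, hus', ih]
    | pred k ih =>
      have e := hus (-k - 1)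
      have e' := hus' (-k - 1)
      rw [sub_add_cancel] at e e'
      omega
  subst huu
  have hmono : StrictMono u := strictMono_int_of_lt_succ fun k => by
    have := hus k
    rw [length_phiW] at this
    have := lval_eq_one_or_three (w k)
    omega
  funext n
  obtain ⟨k, hk, hk'⟩ := hmono.exists_apply_le_lt_apply_add_one n
  have hj : (n - u k).toNat < (phiW t (w k)).length := by
    have := hus k
    omega
  have hn : u k + ((n - u k).toNat : ℤ) = n := by omega
  rw [← hn]
  exact (hz k ⟨_, hj⟩).trans (hz' k ⟨_, hj⟩).symm

lemma IsSubst.substF_eq (h : IsSubst t w z) : substF t w = z := by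
  have hex : ∃ z, IsSubst t w z := ⟨z, h⟩
  rw [substF, dif_pos hex]
  exact hex.choose_spec.unique h

lemma IsSubst.exists_of_shift (h : IsSubst t (shift w) z) :
    ∃ m ≤ 3, ∃ z', IsSubst t w z' ∧ z = shift^[m] z' := by
  obtain ⟨u, hu0, hus, hz⟩ := h
  set m := (phiW t (w 0)).length with hm
  have hu : u (-1) = -m := by
    have := hus (-1)
    norm_num [shift, hu0] at this
    omega
  have hm3 : m ≤ 3 := by
    rw [hm, length_phiW]
    rcases lval_eq_one_or_three (w 0) with h | h <;> omega
  refine ⟨m, hm3, fun n => z (n - m),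
    ⟨fun k => u (k - 1) + m, by simp [hu], fun k => ?_, fun k j => ?_⟩, ?_⟩
  · have := hus (k - 1)
    simp only [shift, sub_add_cancel, add_sub_cancel_right] at this ⊢
    omega
  · obtain ⟨j, hj⟩ := j
    have := hz (k - 1) ⟨j, by simpa [shift] using hj⟩
    simp only [shift, sub_add_cancel, List.get_eq_getElem] at this ⊢
    rw [← this, add_right_comm, add_sub_cancel_right]
  · funext n
    simp [shift_iterate_apply]

lemma IsSubst.exists_of_shift_iterate {n : ℕ} (h : IsSubst t (shift^[n] w) z) :
    ∃ m ≤ 3 * n, ∃ z', IsSubst t w z' ∧ z = shift^[m] z' := by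
  induction n generalizing w with
  | zero => exact ⟨0, le_rfl, z, h, rfl⟩
  | succ n ih =>
    obtain ⟨m, hm, z₁, h₁, rfl⟩ := ih (w := shift w) h
    obtain ⟨m', hm', z₂, h₂, rfl⟩ := h₁.exists_of_shift
    exact ⟨m + m', by omega, z₂, h₂, (Function.iterate_add_apply _ _ _ _).symm⟩

end Substitution

lemma SmoothSeq.exists_isSubst_deltaY {x : ℤ → ℕ} (hx : SmoothSeq x) :
    ∃ i < 3, ∃ z, IsSubst (typeOf (recode x)) (deltaY (recode x)) z ∧
      recode x = shift^[i] z := by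
  have hy := hx.alternating_recode
  have hz : SmoothSeq fun i => lval (recode x i) := by
    rw [funext hx.lval_recode]
    exact smoothSeq_delta hx
  obtain ⟨r, hr⟩ : IsRecoding _ (deltaY (recode x)) := hz.isRecoding_recode
  rw [typeOf_eq_phase hy hr hx.exists_lval_deltaY_recode_eq_three]
  refine ⟨(-r.t 0).toNat, ?_, _, isSubst_shiftZ hy hr, ?_⟩
  · have hlen := (hr 0).2
    rw [zero_add] at hlen
    have := r.start_pos
    have := lval_eq_one_or_three (deltaY (recode x) 0)
    omega
  · funext n
    have := r.start_nonpos
    rw [shift_iterate_apply, shiftZ, add_assoc, Int.toNat_of_nonneg (by omega), neg_add_cancel,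
      add_zero]

theorem SmoothSeq.recode_eq_shift_substComp {x : ℤ → ℕ} (hx : SmoothSeq x) (L : ℕ) :
    ∃ i < 3 ^ L, recode x = shift^[i] (substComp (TypesX x) L (deltaY^[L] (recode x))) := by
  induction L generalizing x with
  | zero => exact ⟨0, by norm_num, rfl⟩
  | succ L ih =>
    obtain ⟨j, hj, hdelta⟩ := ih (smoothSeq_delta hx)
    rw [← hx.deltaY_recode] at hdelta
    obtain ⟨i, hi, z, hz, hxz⟩ := hx.exists_isSubst_deltaY
    rw [hdelta] at hz
    obtain ⟨m, hm, z', hz', rfl⟩ := hz.exists_of_shift_iterate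
    refine ⟨i + m, by rw [pow_succ]; omega, ?_⟩
    have hcomp : substComp (TypesX x) (L + 1) (deltaY^[L + 1] (recode x)) = z' := by
      rw [Function.iterate_succ_apply, ← hz'.substF_eq]
      -- `TypesX x 0` is `typeOf (recode x)` and `TypesX x (n + 1)` is `TypesX (delta x) n`
      rfl
    rwa [hcomp, Function.iterate_add_apply]

theorem stmt5_general (τ : ℕ → Bool) (y : ℤ → ABCD) (hy : y ∈ Yset τ) (L : ℕ) :
    ∃ i : ℕ, i < 3 ^ L ∧ y = shift^[i] (substComp τ L (deltaY^[L] y)) := by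
  obtain ⟨x, ⟨hx, rfl⟩, rfl⟩ := hy
  exact hx.recode_eq_shift_substComp L

/-- Recovering `y` from its `L`-th derivative.
For every `τ`, every `y ∈ Y_τ` and every `L ≥ 1`, there exists `i ∈ {0, ..., 3^L - 1}`
with `y = S^i (φ_{τ₀} ∘ ⋯ ∘ φ_{τ_{L-1}})(Δ^L y)`. -/
theorem stmt5 (τ : ℕ → Bool) (y : ℤ → ABCD) (hy : y ∈ Yset τ) (L : ℕ) (hL : 1 ≤ L) :
    ∃ i : ℕ, i < 3 ^ L ∧ y = shift^[i] (substComp τ L (deltaY^[L] y)) :=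
  stmt5_general τ y hy L
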